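/- arXiv:2501.02893 — 4 statements merged into one kernel-verified Lean document; each statement's English description precedes it below -/
import Mathlib

section
/- Let A1, A2 be invertible n×n real matrices, let A3, A4, B1, B2 be n×n real matrices, and let 𝒳, 𝒴, 𝒲x, 𝒲y, ℳ be subsets of ℝⁿ. Suppose x ∈ 𝒳, y ∈ 𝒴, wx ∈ 𝒲x, wy ∈ 𝒲y, and A1·x + A2·y + B1·wx ∈ ℳ. Define 𝓜x = A1⁻¹ℳ ⊕ (−A1⁻¹A2)𝒴 ⊕ (−A1⁻¹B1)𝒲x, 𝓜y = A2⁻¹ℳ ⊕ (−A2⁻¹A1)𝒳 ⊕ (−A2⁻¹B1)𝒲x, 𝒳' = 𝓜x ∩ 𝒳, 𝒴' = 𝓜y ∩ 𝒴, and 𝒴post = A3𝒳' ⊕ A4𝒴' ⊕ B2𝒲y. Then x ∈ 𝒳', y ∈ 𝒴', and A3·x + A4·y + B2·wy ∈ 𝒴post. -/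
/-!
Reading off the public dynamics `m = A₁ x + A₂ y + B₁ wₓ` with `A₁` (resp. `A₂`) invertible
expresses the true `x` (resp. `y`) as `A₁⁻¹ m - A₁⁻¹ A₂ y - A₁⁻¹ B₁ wₓ`, an element of the
Minkowski sum defining `𝓜x` (resp. `𝓜y`); the true next private state is then obtained from
the calibrated states by the same linear maps that generate `𝒴post`.
-/

open Matrix Set Pointwise

theorem add_add_mem_image_add_image_add_image {α β γ δ : Type*} [Add δ]
    {f : α → δ} {g : β → δ} {h : γ → δ} {S : Set α} {T : Set β} {U : Set γ}
    {a : α} {b : β} {c : γ} (ha : a ∈ S) (hb : b ∈ T) (hc : c ∈ U) :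
    f a + g b + h c ∈ f '' S + g '' T + h '' U :=
  add_mem_add (add_mem_add (mem_image_of_mem f ha) (mem_image_of_mem g hb)) (mem_image_of_mem h hc)

namespace Matrix

variable {ι κ μ R : Type*} [Fintype ι] [DecidableEq ι] [Fintype κ] [Fintype μ] [CommRing R]
  {A : Matrix ι ι R} {B : Matrix ι κ R} {C : Matrix ι μ R}

theorem inv_mulVec_add_add_eq (hA : IsUnit A.det) (x : ι → R) (y : κ → R) (w : μ → R) :
    A⁻¹ *ᵥ (A *ᵥ x + B *ᵥ y + C *ᵥ w) + (-(A⁻¹ * B)) *ᵥ y + (-(A⁻¹ * C)) *ᵥ w = x := by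
  simp only [mulVec_add, mulVec_mulVec, neg_mulVec, nonsing_inv_mul A hA, one_mulVec]
  abel

theorem mem_inv_image_add_image_add_image (hA : IsUnit A.det) {M : Set (ι → R)}
    {Y : Set (κ → R)} {W : Set (μ → R)} {x : ι → R} {y : κ → R} {w : μ → R}
    (hm : A *ᵥ x + B *ᵥ y + C *ᵥ w ∈ M) (hy : y ∈ Y) (hw : w ∈ W) :
    x ∈ A⁻¹.mulVec '' M + (-(A⁻¹ * B)).mulVec '' Y + (-(A⁻¹ * C)).mulVec '' W :=
  inv_mulVec_add_add_eq hA x y w ▸ add_add_mem_image_add_image_add_image hm hy hw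

end Matrix

/-- Soundness of the one-step inference attack (Proposition 1, first part):
if the observation set contains the true public state, the calibrated sets
contain the true previous states, and the posterior private-state set contains
the true next private state. -/
theorem inference_attack_sound {n : ℕ}
    (A1 A2 A3 A4 B1 B2 : Matrix (Fin n) (Fin n) ℝ)
    (hA1 : IsUnit A1.det) (hA2 : IsUnit A2.det)
    (X Y Wx Wy M : Set (Fin n → ℝ))
    (x y wx wy : Fin n → ℝ)
    (hx : x ∈ X) (hy : y ∈ Y) (hwx : wx ∈ Wx) (hwy : wy ∈ Wy)
    (hM : A1.mulVec x + A2.mulVec y + B1.mulVec wx ∈ M)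
    (Mx My X' Y' Ypost : Set (Fin n → ℝ))
    (hMx : Mx = A1⁻¹.mulVec '' M + (-(A1⁻¹ * A2)).mulVec '' Y
            + (-(A1⁻¹ * B1)).mulVec '' Wx)
    (hMy : My = A2⁻¹.mulVec '' M + (-(A2⁻¹ * A1)).mulVec '' X
            + (-(A2⁻¹ * B1)).mulVec '' Wx)
    (hX' : X' = Mx ∩ X) (hY' : Y' = My ∩ Y)
    (hYpost : Ypost = A3.mulVec '' X' + A4.mulVec '' Y' + B2.mulVec '' Wy) :
    x ∈ X' ∧ y ∈ Y' ∧ A3.mulVec x + A4.mulVec y + B2.mulVec wy ∈ Ypost := by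
  subst hMx hMy hX' hY' hYpost
  have hxX' : x ∈ _ ∩ X := ⟨mem_inv_image_add_image_add_image hA1 hM hy hwx, hx⟩
  have hM' : A2 *ᵥ y + A1 *ᵥ x + B1 *ᵥ wx ∈ M := by rwa [add_comm (A2 *ᵥ y)]
  have hyY' : y ∈ _ ∩ Y := ⟨mem_inv_image_add_image_add_image hA2 hM' hx hwx, hy⟩
  exact ⟨hxX', hyY', add_add_mem_image_add_image_add_image hxX' hyY' hwy⟩
end

section
/- Let 𝒳 = {G_x ξ + c_x : A_x ξ = b_x, ξ ∈ 𝒞_x} ⊆ ℝⁿ and 𝒴 = {G_y η + c_y : A_y η = b_y, η ∈ 𝒞_y} ⊆ ℝⁿ be constrained convex generators. Then the intersection 𝒳 ∩ 𝒴 equals the constrained convex generator {G_x ξ + c_x : A_x ξ = b_x, A_y η = b_y, G_x ξ − G_y η = c_y − c_x, ξ ∈ 𝒞_x, η ∈ 𝒞_y}, i.e., the set of points G_x ξ + c_x over all pairs (ξ, η) ∈ 𝒞_x × 𝒞_y satisfying A_x ξ = b_x, A_y η = b_y, and G_x ξ − G_y η = c_y − c_x. -/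
open Matrix Set

theorem add_eq_add_iff_sub_eq_sub {E : Type*} [AddCommGroup E] {a b c d : E} :
    a + b = c + d ↔ a - c = d - b := by
  rw [sub_eq_sub_iff_add_eq_add, add_comm d]

/-- Intersection of two constrained convex generators (Proposition 2, intersection). -/
theorem ccg_intersection {n ngx ngy ncx ncy : ℕ}
    (Gx : Matrix (Fin n) (Fin ngx) ℝ) (cx : Fin n → ℝ)
    (Ax : Matrix (Fin ncx) (Fin ngx) ℝ) (bx : Fin ncx → ℝ) (Cx : Set (Fin ngx → ℝ))
    (Gy : Matrix (Fin n) (Fin ngy) ℝ) (cy : Fin n → ℝ)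
    (Ay : Matrix (Fin ncy) (Fin ngy) ℝ) (bY : Fin ncy → ℝ) (Cy : Set (Fin ngy → ℝ)) :
    {z | ∃ ξ ∈ Cx, Ax.mulVec ξ = bx ∧ z = Gx.mulVec ξ + cx}
      ∩ {z | ∃ η ∈ Cy, Ay.mulVec η = bY ∧ z = Gy.mulVec η + cy}
      = {z | ∃ ξ ∈ Cx, ∃ η ∈ Cy, Ax.mulVec ξ = bx ∧ Ay.mulVec η = bY ∧
            Gx.mulVec ξ - Gy.mulVec η = cy - cx ∧ z = Gx.mulVec ξ + cx} := by
  ext z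
  constructor
  · rintro ⟨⟨ξ, hξ, hAx, rfl⟩, η, hη, hAy, hsame⟩
    exact ⟨ξ, hξ, η, hη, hAx, hAy, add_eq_add_iff_sub_eq_sub.1 hsame, rfl⟩
  · rintro ⟨ξ, hξ, η, hη, hAx, hAy, hgap, rfl⟩
    exact ⟨⟨ξ, hξ, hAx, rfl⟩, η, hη, hAy, add_eq_add_iff_sub_eq_sub.2 hgap⟩
end

section
/- Let A1, A2 be invertible n×n real matrices and A3, A4, B1, B2 be n×n real matrices. Let [l_x,u_x], [l_y,u_y], [l_wx,u_wx], [l_wy,u_wy], [l_m,u_m] be boxes in ℝⁿ, and suppose x ∈ [l_x,u_x], y ∈ [l_y,u_y], wx ∈ [l_wx,u_wx], wy ∈ [l_wy,u_wy], and A1x + A2y + B1wx ∈ [l_m,u_m]. Define the boxes 𝓜x = Ψ(A1⁻¹)[l_m,u_m] ⊕ Ψ(−A1⁻¹A2)[l_y,u_y] ⊕ Ψ(−A1⁻¹B1)[l_wx,u_wx] and 𝓜y = Ψ(A2⁻¹)[l_m,u_m] ⊕ Ψ(−A2⁻¹A1)[l_x,u_x] ⊕ Ψ(−A2⁻¹B1)[l_wx,u_wx],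 where the Minkowski sum of boxes is the box whose endpoints are the sums of the endpoints. Let 𝒳' be the box with lower endpoint max{lower(𝓜x), l_x} and upper endpoint min{upper(𝓜x), u_x} (componentwise), and 𝒴' the analogous componentwise intersection of 𝓜y with [l_y,u_y]. Then the true next private state A3x + A4y + B2wy belongs to the box Ψ(A3)𝒳' ⊕ Ψ(A4)𝒴' ⊕ Ψ(B2)[l_wy,u_wy]. -/
/-!
Writing `A = A⁺ + A⁻` with `A⁺ ≥ 0 ≥ A⁻` entrywise shows that `Ψ(A)[l,u]` contains `A v` for
every `v ∈ [l,u]`. Since `A1` is invertible, the measured quantity `m = A1 x + A2 y + B1 wx` can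
be solved for `x = A1⁻¹ m - A1⁻¹A2 y - A1⁻¹B1 wx`, each term of which has a known box; hence
`x ∈ 𝓜x`, and so `x ∈ 𝓜x ∩ [l_x,u_x] = 𝒳'`. Symmetrically `y ∈ 𝒴'` using `A2`, and one more
application of the soundness of `Ψ` places the next private state in the stated box.
-/

open Matrix

/-- A⁺ = (A + |A|)/2. -/
noncomputable def matPos {n : ℕ} (A : Matrix (Fin n) (Fin n) ℝ) :
    Matrix (Fin n) (Fin n) ℝ := Matrix.of fun i j => (A i j + |A i j|) / 2

/-- A⁻ = (A − |A|)/2. -/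
noncomputable def matNeg {n : ℕ} (A : Matrix (Fin n) (Fin n) ℝ) :
    Matrix (Fin n) (Fin n) ℝ := Matrix.of fun i j => (A i j - |A i j|) / 2

/-- Lower endpoint of Ψ(A)[l,u] = [A⁺l + A⁻u, A⁻l + A⁺u]. -/
noncomputable def psiLo {n : ℕ} (A : Matrix (Fin n) (Fin n) ℝ) (l u : Fin n → ℝ) :
    Fin n → ℝ := (matPos A).mulVec l + (matNeg A).mulVec u

/-- Upper endpoint of Ψ(A)[l,u] = [A⁺l + A⁻u, A⁻l + A⁺u]. -/
noncomputable def psiHi {n : ℕ} (A : Matrix (Fin n) (Fin n) ℝ) (l u : Fin n → ℝ) :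
    Fin n → ℝ := (matNeg A).mulVec l + (matPos A).mulVec u

open Set

section Scalar

variable (a : ℝ) {l u v : ℝ}

lemma posPart_mul_add_negPart_mul_le_mul (hl : l ≤ v) (hu : v ≤ u) :
    (a + |a|) / 2 * l + (a - |a|) / 2 * u ≤ a * v := by
  rcases abs_cases a with ⟨ha, _⟩ | ⟨ha, _⟩ <;> rw [ha] <;> nlinarith

lemma mul_le_negPart_mul_add_posPart_mul (hl : l ≤ v) (hu : v ≤ u) :
    a * v ≤ (a - |a|) / 2 * l + (a + |a|) / 2 * u := by
  rcases abs_cases a with ⟨ha, _⟩ | ⟨ha, _⟩ <;> rw [ha] <;> nlinarith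

end Scalar

section Psi

variable {n : ℕ} (A : Matrix (Fin n) (Fin n) ℝ) {l u v : Fin n → ℝ}

lemma psiLo_le_mulVec (hl : l ≤ v) (hu : v ≤ u) : psiLo A l u ≤ A *ᵥ v := fun i => by
  simp only [psiLo, matPos, matNeg, Pi.add_apply, mulVec, dotProduct, of_apply,
    ← Finset.sum_add_distrib]
  exact Finset.sum_le_sum fun j _ => posPart_mul_add_negPart_mul_le_mul (A i j) (hl j) (hu j)

lemma mulVec_le_psiHi (hl : l ≤ v) (hu : v ≤ u) : A *ᵥ v ≤ psiHi A l u := fun i => by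
  simp only [psiHi, matPos, matNeg, Pi.add_apply, mulVec, dotProduct, of_apply,
    ← Finset.sum_add_distrib]
  exact Finset.sum_le_sum fun j _ => mul_le_negPart_mul_add_posPart_mul (A i j) (hl j) (hu j)

lemma mulVec_mem_Icc_psi (hv : v ∈ Icc l u) : A *ᵥ v ∈ Icc (psiLo A l u) (psiHi A l u) :=
  ⟨psiLo_le_mulVec A hv.1 hv.2, mulVec_le_psiHi A hv.1 hv.2⟩

end Psi

lemma mulVec_add_mulVec_add_mulVec_mem_Icc_psi {n : ℕ} (A B C : Matrix (Fin n) (Fin n) ℝ)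
    {la ua lb ub lc uc a b c : Fin n → ℝ}
    (ha : a ∈ Icc la ua) (hb : b ∈ Icc lb ub) (hc : c ∈ Icc lc uc) :
    A *ᵥ a + B *ᵥ b + C *ᵥ c ∈ Icc (psiLo A la ua + psiLo B lb ub + psiLo C lc uc)
      (psiHi A la ua + psiHi B lb ub + psiHi C lc uc) :=
  Icc_add_Icc_subset _ _ _ _ <| add_mem_add
    (Icc_add_Icc_subset _ _ _ _ <| add_mem_add (mulVec_mem_Icc_psi A ha) (mulVec_mem_Icc_psi B hb))
    (mulVec_mem_Icc_psi C hc)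

lemma inv_mulVec_add_neg_mulVec_eq {ι R : Type*} [Fintype ι] [DecidableEq ι] [CommRing R]
    {A B C : Matrix ι ι R} (hA : IsUnit A.det) {m v w z : ι → R}
    (hm : A *ᵥ v + B *ᵥ w + C *ᵥ z = m) :
    A⁻¹ *ᵥ m + (-(A⁻¹ * B)) *ᵥ w + (-(A⁻¹ * C)) *ᵥ z = v := by
  rw [← hm]
  simp only [mulVec_add, mulVec_mulVec, neg_mulVec, nonsing_inv_mul A hA, one_mulVec]
  abel

/-- Soundness of the interval-based one-step inference attack (Lemma 1):
the true next private state A3·x + A4·y + B2·wy lies in the box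
Ψ(A3)𝒳' ⊕ Ψ(A4)𝒴' ⊕ Ψ(B2)[l_wy,u_wy], where 𝒳', 𝒴' are the calibrated boxes. -/
theorem interval_inference_sound {n : ℕ}
    (A1 A2 A3 A4 B1 B2 : Matrix (Fin n) (Fin n) ℝ)
    (hA1 : IsUnit A1.det) (hA2 : IsUnit A2.det)
    (lx ux ly uy lwx uwx lwy uwy lm um : Fin n → ℝ)
    (x y wx wy : Fin n → ℝ)
    (hx₁ : lx ≤ x) (hx₂ : x ≤ ux)
    (hy₁ : ly ≤ y) (hy₂ : y ≤ uy)
    (hwx₁ : lwx ≤ wx) (hwx₂ : wx ≤ uwx)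
    (hwy₁ : lwy ≤ wy) (hwy₂ : wy ≤ uwy)
    (hm₁ : lm ≤ A1.mulVec x + A2.mulVec y + B1.mulVec wx)
    (hm₂ : A1.mulVec x + A2.mulVec y + B1.mulVec wx ≤ um)
    (MxLo MxHi MyLo MyHi X'lo X'hi Y'lo Y'hi : Fin n → ℝ)
    (hMxLo : MxLo = psiLo A1⁻¹ lm um + psiLo (-(A1⁻¹ * A2)) ly uy
                    + psiLo (-(A1⁻¹ * B1)) lwx uwx)
    (hMxHi : MxHi = psiHi A1⁻¹ lm um + psiHi (-(A1⁻¹ * A2)) ly uy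
                    + psiHi (-(A1⁻¹ * B1)) lwx uwx)
    (hMyLo : MyLo = psiLo A2⁻¹ lm um + psiLo (-(A2⁻¹ * A1)) lx ux
                    + psiLo (-(A2⁻¹ * B1)) lwx uwx)
    (hMyHi : MyHi = psiHi A2⁻¹ lm um + psiHi (-(A2⁻¹ * A1)) lx ux
                    + psiHi (-(A2⁻¹ * B1)) lwx uwx)
    (hX'lo : X'lo = MxLo ⊔ lx) (hX'hi : X'hi = MxHi ⊓ ux)
    (hY'lo : Y'lo = MyLo ⊔ ly) (hY'hi : Y'hi = MyHi ⊓ uy) :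
    psiLo A3 X'lo X'hi + psiLo A4 Y'lo Y'hi + psiLo B2 lwy uwy
      ≤ A3.mulVec x + A4.mulVec y + B2.mulVec wy ∧
    A3.mulVec x + A4.mulVec y + B2.mulVec wy
      ≤ psiHi A3 X'lo X'hi + psiHi A4 Y'lo Y'hi + psiHi B2 lwy uwy := by
  have hmIcc : A1 *ᵥ x + A2 *ᵥ y + B1 *ᵥ wx ∈ Icc lm um := ⟨hm₁, hm₂⟩
  have hxIcc : x ∈ Icc lx ux := ⟨hx₁, hx₂⟩
  have hyIcc : y ∈ Icc ly uy := ⟨hy₁, hy₂⟩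
  have hwxIcc : wx ∈ Icc lwx uwx := ⟨hwx₁, hwx₂⟩
  have hxM : x ∈ Icc MxLo MxHi := by
    rw [hMxLo, hMxHi, ← inv_mulVec_add_neg_mulVec_eq (v := x) (w := y) (z := wx) hA1 rfl]
    exact mulVec_add_mulVec_add_mulVec_mem_Icc_psi _ _ _ hmIcc hyIcc hwxIcc
  have hyM : y ∈ Icc MyLo MyHi := by
    have hm' : A2 *ᵥ y + A1 *ᵥ x + B1 *ᵥ wx = A1 *ᵥ x + A2 *ᵥ y + B1 *ᵥ wx := by abel
    rw [hMyLo, hMyHi, ← inv_mulVec_add_neg_mulVec_eq hA2 hm']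
    exact mulVec_add_mulVec_add_mulVec_mem_Icc_psi _ _ _ hmIcc hxIcc hwxIcc
  have hxX' : x ∈ Icc X'lo X'hi := by
    rw [hX'lo, hX'hi, ← Icc_inter_Icc]
    exact ⟨hxM, hxIcc⟩
  have hyY' : y ∈ Icc Y'lo Y'hi := by
    rw [hY'lo, hY'hi, ← Icc_inter_Icc]
    exact ⟨hyM, hyIcc⟩
  exact mulVec_add_mulVec_add_mulVec_mem_Icc_psi A3 A4 B2 hxX' hyY' ⟨hwy₁, hwy₂⟩
end

section
/- Let A3, A4, B2 be n×n real matrices. Let [l_x,u_x] ⊇ [l_x',u_x'] and [l_y,u_y] ⊇ [l_y',u_y'] be nested boxes in ℝⁿ with radii p_x = (u_x − l_x)/2, p_x' = (u_x' − l_x')/2, p_y = (u_y − l_y)/2, p_y' = (u_y' − l_y')/2, and let [l_w,u_w] be a box in ℝⁿ. Define the prior box 𝒴prior = Ψ(A3)[l_x,u_x] ⊕ Ψ(A4)[l_y,u_y] ⊕ Ψ(B2)[l_w,u_w] and the posterior box 𝒴post = Ψ(A3)[l_x',u_x'] ⊕ Ψ(A4)[l_y',u_y'] ⊕ Ψ(B2)[l_w,u_w].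 Then 𝒴post ⊆ 𝒴prior and the reduction in surrogate volume satisfies Vol̄(𝒴prior) − Vol̄(𝒴post) = 2‖ |A3|(p_x − p_x') + |A4|(p_y − p_y') ‖₁. -/
open Matrix Finset

/-- Entrywise absolute value of a matrix. -/
noncomputable def matAbs {n : ℕ} (A : Matrix (Fin n) (Fin n) ℝ) :
    Matrix (Fin n) (Fin n) ℝ := Matrix.of fun i j => |A i j|

/-- Surrogate volume of the box [l,u]: Σᵢ (u i − l i). -/
noncomputable def volBar {n : ℕ} (l u : Fin n → ℝ) : ℝ := ∑ i, (u i - l i)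

/-- 1-norm of a vector: Σᵢ |v i|. -/
noncomputable def norm1 {n : ℕ} (v : Fin n → ℝ) : ℝ := ∑ i, |v i|

/-!
Since `A⁺ - A⁻ = |A|`, the box `Ψ(A)[l,u]` has width `|A| (u - l)`, and widths add under
Minkowski sums. The `B2` terms cancel, so the width drops by `|A3| (2 (p_x - p_x')) +
|A4| (2 (p_y - p_y'))`, a nonnegative vector because `|A|` has nonnegative entries and shrinking a
box shrinks its radius; the sum of a nonnegative vector is its 1-norm. Nestedness holds because
`A⁺ ≥ 0` and `A⁻ ≤ 0` make the endpoints of `Ψ(A)[l,u]` monotone in `l` and `u`.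
-/

namespace Matrix

variable {m n R : Type*} [Fintype n] [Ring R] [PartialOrder R] [IsOrderedRing R]

theorem mulVec_mono_of_nonneg {M : Matrix m n R} (hM : ∀ i j, 0 ≤ M i j) {u v : n → R}
    (huv : u ≤ v) : M *ᵥ u ≤ M *ᵥ v :=
  fun i => dotProduct_le_dotProduct_of_nonneg_left huv (hM i)

theorem mulVec_anti_of_nonpos {M : Matrix m n R} (hM : ∀ i j, M i j ≤ 0) {u v : n → R}
    (huv : u ≤ v) : M *ᵥ v ≤ M *ᵥ u :=
  fun i => Finset.sum_le_sum fun j _ => mul_le_mul_of_nonpos_left (huv j) (hM i j)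

end Matrix

section Boxes

variable {n : ℕ}

theorem matPos_nonneg (A : Matrix (Fin n) (Fin n) ℝ) (i j : Fin n) : 0 ≤ matPos A i j := by
  simp only [matPos, of_apply]
  linarith [neg_abs_le (A i j)]

theorem matNeg_nonpos (A : Matrix (Fin n) (Fin n) ℝ) (i j : Fin n) : matNeg A i j ≤ 0 := by
  simp only [matNeg, of_apply]
  linarith [le_abs_self (A i j)]

theorem matPos_sub_matNeg (A : Matrix (Fin n) (Fin n) ℝ) : matPos A - matNeg A = matAbs A := by
  ext i j
  simp only [matPos, matNeg, matAbs, Matrix.sub_apply, of_apply]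
  ring

theorem psiLo_mono (A : Matrix (Fin n) (Fin n) ℝ) {l u l' u' : Fin n → ℝ}
    (hl : l ≤ l') (hu : u' ≤ u) : psiLo A l u ≤ psiLo A l' u' :=
  add_le_add (mulVec_mono_of_nonneg (matPos_nonneg A) hl)
    (mulVec_anti_of_nonpos (matNeg_nonpos A) hu)

theorem psiHi_anti (A : Matrix (Fin n) (Fin n) ℝ) {l u l' u' : Fin n → ℝ}
    (hl : l ≤ l') (hu : u' ≤ u) : psiHi A l' u' ≤ psiHi A l u :=
  add_le_add (mulVec_anti_of_nonpos (matNeg_nonpos A) hl)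
    (mulVec_mono_of_nonneg (matPos_nonneg A) hu)

theorem psiHi_sub_psiLo (A : Matrix (Fin n) (Fin n) ℝ) (l u : Fin n → ℝ) :
    psiHi A l u - psiLo A l u = matAbs A *ᵥ (u - l) := by
  rw [← matPos_sub_matNeg, sub_mulVec, mulVec_sub, mulVec_sub, psiHi, psiLo]
  abel

theorem matAbs_mulVec_nonneg (A : Matrix (Fin n) (Fin n) ℝ) {v : Fin n → ℝ} (hv : 0 ≤ v) :
    0 ≤ matAbs A *ᵥ v :=
  fun i => dotProduct_nonneg_of_nonneg (fun j => abs_nonneg (A i j)) hv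

theorem volBar_sub_volBar (l u l' u' : Fin n → ℝ) :
    volBar l u - volBar l' u' = ∑ i, ((u - l) - (u' - l')) i := by
  simp only [volBar, ← Finset.sum_sub_distrib, Pi.sub_apply]

theorem norm1_of_nonneg {v : Fin n → ℝ} (hv : 0 ≤ v) : norm1 v = ∑ i, v i :=
  Finset.sum_congr rfl fun i _ => abs_of_nonneg (hv i)

end Boxes

section Radii

variable {ι : Type*} {l u l' u' p p' : ι → ℝ}

theorem width_sub_width_eq_two_smul (hp : p = (u - l) / 2) (hp' : p' = (u' - l') / 2) :
    (u - l) - (u' - l') = (2 : ℝ) • (p - p') := by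
  subst hp hp'
  ext i
  simp only [Pi.sub_apply, Pi.div_apply, Pi.smul_apply, Pi.ofNat_apply, smul_eq_mul]
  ring

theorem radius_sub_radius_nonneg (hl : l ≤ l') (hu : u' ≤ u) (hp : p = (u - l) / 2)
    (hp' : p' = (u' - l') / 2) : 0 ≤ p - p' := by
  subst hp hp'
  intro i
  simp only [Pi.sub_apply, Pi.div_apply, Pi.ofNat_apply]
  linarith [hl i, hu i]

end Radii

theorem uncertainty_reduction_eq_general {n : ℕ}
    (A3 A4 B2 : Matrix (Fin n) (Fin n) ℝ)
    (lx ux lx' ux' ly uy ly' uy' lw uw : Fin n → ℝ)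
    (hx₁ : lx ≤ lx') (hx₂ : ux' ≤ ux)
    (hy₁ : ly ≤ ly') (hy₂ : uy' ≤ uy)
    (px px' py py' : Fin n → ℝ)
    (hpx : px = (ux - lx) / 2) (hpx' : px' = (ux' - lx') / 2)
    (hpy : py = (uy - ly) / 2) (hpy' : py' = (uy' - ly') / 2)
    (loPrior hiPrior loPost hiPost : Fin n → ℝ)
    (hloPrior : loPrior = psiLo A3 lx ux + psiLo A4 ly uy + psiLo B2 lw uw)
    (hhiPrior : hiPrior = psiHi A3 lx ux + psiHi A4 ly uy + psiHi B2 lw uw)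
    (hloPost : loPost = psiLo A3 lx' ux' + psiLo A4 ly' uy' + psiLo B2 lw uw)
    (hhiPost : hiPost = psiHi A3 lx' ux' + psiHi A4 ly' uy' + psiHi B2 lw uw) :
    Set.Icc loPost hiPost ⊆ Set.Icc loPrior hiPrior ∧
    volBar loPrior hiPrior - volBar loPost hiPost
      = 2 * norm1 ((matAbs A3).mulVec (px - px') + (matAbs A4).mulVec (py - py')) := by
  refine ⟨?_, ?_⟩
  · subst hloPrior hhiPrior hloPost hhiPost
    refine Set.Icc_subset_Icc ?_ ?_
    · exact add_le_add_left (add_le_add (psiLo_mono A3 hx₁ hx₂) (psiLo_mono A4 hy₁ hy₂)) _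
    · exact add_le_add_left (add_le_add (psiHi_anti A3 hx₁ hx₂) (psiHi_anti A4 hy₁ hy₂)) _
  set w := matAbs A3 *ᵥ (px - px') + matAbs A4 *ᵥ (py - py')
  have hwidth : (hiPrior - loPrior) - (hiPost - loPost) = (2 : ℝ) • w := calc
    _ = matAbs A3 *ᵥ ((ux - lx) - (ux' - lx')) + matAbs A4 *ᵥ ((uy - ly) - (uy' - ly')) := by
      rw [mulVec_sub (matAbs A3) (ux - lx), mulVec_sub (matAbs A4) (uy - ly),
        ← psiHi_sub_psiLo A3 lx ux, ← psiHi_sub_psiLo A3 lx' ux', ← psiHi_sub_psiLo A4 ly uy,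
        ← psiHi_sub_psiLo A4 ly' uy', hloPrior, hhiPrior, hloPost, hhiPost]
      abel
    _ = (2 : ℝ) • w := by
      rw [width_sub_width_eq_two_smul hpx hpx', width_sub_width_eq_two_smul hpy hpy',
        mulVec_smul, mulVec_smul, smul_add]
  have hw : 0 ≤ w := add_nonneg
    (matAbs_mulVec_nonneg A3 (radius_sub_radius_nonneg hx₁ hx₂ hpx hpx'))
    (matAbs_mulVec_nonneg A4 (radius_sub_radius_nonneg hy₁ hy₂ hpy hpy'))
  rw [volBar_sub_volBar, hwidth, norm1_of_nonneg hw, Finset.mul_sum]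
  simp only [Pi.smul_apply, smul_eq_mul]

/-- Exact uncertainty-reduction identity of Theorem 1: the posterior box is
nested in the prior box and the surrogate-volume reduction equals
2‖|A3|(p_x − p_x') + |A4|(p_y − p_y')‖₁. -/
theorem uncertainty_reduction_eq {n : ℕ}
    (A3 A4 B2 : Matrix (Fin n) (Fin n) ℝ)
    (lx ux lx' ux' ly uy ly' uy' lw uw : Fin n → ℝ)
    (hx₁ : lx ≤ lx') (hx₂ : ux' ≤ ux) (hx' : lx' ≤ ux')
    (hy₁ : ly ≤ ly') (hy₂ : uy' ≤ uy) (hy' : ly' ≤ uy')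
    (hw : lw ≤ uw)
    (px px' py py' : Fin n → ℝ)
    (hpx : px = (ux - lx) / 2) (hpx' : px' = (ux' - lx') / 2)
    (hpy : py = (uy - ly) / 2) (hpy' : py' = (uy' - ly') / 2)
    (loPrior hiPrior loPost hiPost : Fin n → ℝ)
    (hloPrior : loPrior = psiLo A3 lx ux + psiLo A4 ly uy + psiLo B2 lw uw)
    (hhiPrior : hiPrior = psiHi A3 lx ux + psiHi A4 ly uy + psiHi B2 lw uw)
    (hloPost : loPost = psiLo A3 lx' ux' + psiLo A4 ly' uy' + psiLo B2 lw uw)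
    (hhiPost : hiPost = psiHi A3 lx' ux' + psiHi A4 ly' uy' + psiHi B2 lw uw) :
    Set.Icc loPost hiPost ⊆ Set.Icc loPrior hiPrior ∧
    volBar loPrior hiPrior - volBar loPost hiPost
      = 2 * norm1 ((matAbs A3).mulVec (px - px') + (matAbs A4).mulVec (py - py')) :=
  uncertainty_reduction_eq_general A3 A4 B2 lx ux lx' ux' ly uy ly' uy' lw uw hx₁ hx₂ hy₁ hy₂ px px'
    py py' hpx hpx' hpy hpy' loPrior hiPrior loPost hiPost hloPrior hhiPrior hloPost hhiPost
end
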